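/- arXiv:1703.09750 — 5 statements merged into one kernel-verified Lean document; each statement's English description precedes it below -/
import Mathlib

section
/- There exists an infinite square-free sequence over a three-letter alphabet: there is a function f : ℕ → Fin 3 such that for every i : ℕ and every n ≥ 1 there exists k < n with f (i + k) ≠ f (i + n + k). -/
/-- Thue–Morse sequence. -/
def tm (n : ℕ) : Bool :=
  if h : n = 0 then false
  else xor (n % 2 == 1) (tm (n / 2))
decreasing_by exact Nat.div_lt_self (Nat.pos_of_ne_zero h) one_lt_two

lemma tm_zero : tm 0 = false := by rw [tm]; simp

lemma tm_even (n : ℕ) : tm (2 * n) = tm n := by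
  rcases Nat.eq_zero_or_pos n with h | h
  · simp [h]
  · have h2 : 2 * n ≠ 0 := by omega
    rw [tm]
    simp [h2, Nat.mul_mod_right, Nat.mul_div_cancel_left _ (by norm_num : 0 < 2)]

lemma tm_odd (n : ℕ) : tm (2 * n + 1) = !tm n := by
  have h2 : 2 * n + 1 ≠ 0 := by omega
  rw [tm]
  have hm : (2 * n + 1) % 2 = 1 := by omega
  have hd : (2 * n + 1) / 2 = n := by omega
  simp [h2, hm, hd, Bool.xor_comm]

lemma tm_ne (n : ℕ) : tm (2 * n) ≠ tm (2 * n + 1) := by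
  rw [tm_even, tm_odd]
  cases tm n <;> simp

/-- Thue–Morse is overlap-free. -/
lemma tm_no_overlap : ∀ p, 0 < p → ∀ i, ¬ (∀ k ≤ p, tm (i + k) = tm (i + p + k)) := by
  intro p
  induction p using Nat.strong_induction_on with
  | _ p IH =>
    intro hp i H
    rcases Nat.even_or_odd p with ⟨q, hq⟩ | ⟨r, hr⟩
    · -- even case: reduce to period q = p/2
      have hq1 : 0 < q := by omega
      apply IH q (by omega) hq1 (i / 2)
      intro k hk
      have h2k : 2 * k ≤ p := by omega
      have e := H (2 * k) h2k
      rcases Nat.even_or_odd i with ⟨m, hm⟩ | ⟨m, hm⟩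
      · have e1 : i + 2 * k = 2 * (i / 2 + k) := by omega
        have e2 : i + p + 2 * k = 2 * (i / 2 + q + k) := by omega
        rw [e1, e2, tm_even, tm_even] at e
        exact e
      · have e1 : i + 2 * k = 2 * (i / 2 + k) + 1 := by omega
        have e2 : i + p + 2 * k = 2 * (i / 2 + q + k) + 1 := by omega
        rw [e1, e2, tm_odd, tm_odd] at e
        simpa using e
    · -- odd case: p = 2r+1
      -- Window property: tm (i+k) ≠ tm (i+k+1) for all k < 2p
      have W : ∀ k < 2 * p, tm (i + k) ≠ tm (i + k + 1) := by
        have W' : ∀ k < p, tm (i + k) ≠ tm (i + k + 1) ∧ tm (i + p + k) ≠ tm (i + p + k + 1) := by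
          intro k hk
          have e1 := H k (le_of_lt hk)
          have e2 := H (k + 1) hk
          have e2' : tm (i + k + 1) = tm (i + p + k + 1) := by
            have : i + (k+1) = i + k + 1 := by ring
            rw [this] at e2
            have : i + p + (k+1) = i + p + k + 1 := by ring
            rw [this] at e2
            exact e2
          rcases Nat.even_or_odd (i + k) with ⟨m, hm⟩ | ⟨m, hm⟩
          · have hne : tm (i + k) ≠ tm (i + k + 1) := by
              have h1 : i + k = 2 * m := by omega
              have h2 : i + k + 1 = 2 * m + 1 := by omega
              rw [h1]; exact tm_ne m
            exact ⟨hne, by rw [← e1, ← e2']; exact hne⟩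
          · have hm2 : i + p + k = 2 * (m + r + 1) := by omega
            have hne : tm (i + p + k) ≠ tm (i + p + k + 1) := by
              have h2 : i + p + k + 1 = 2 * (m + r + 1) + 1 := by omega
              rw [hm2]; exact tm_ne (m + r + 1)
            exact ⟨by rw [e1, e2']; exact hne, hne⟩
        intro k hk
        rcases lt_or_ge k p with h | h
        · exact (W' k h).1
        · have hk' : k - p < p := by omega
          have := (W' (k - p) hk').2
          have heq : i + p + (k - p) = i + k := by omega
          rwa [heq] at this
      rcases Nat.lt_or_ge p 2 with hp2 | hp2
      · -- p = 1
        have hp1 : p = 1 := by omega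
        have e := H 0 (by omega)
        have w := W 0 (by omega)
        have e1 := H 1 (le_of_eq hp1.symm)
        rw [hp1] at e
        simp at e w
        exact w e
      · -- p ≥ 3 (odd): find k < 2p with i + k ≡ 1 mod 4
        have hp3 : 3 ≤ p := by omega
        set k := (5 - i % 4) % 4 with hkdef
        have hik : (i + k) % 4 = 1 := by omega
        have hk2p : k < 2 * p := by omega
        set m := (i + k) / 4 with hmdef
        have h1 : i + k = 2 * (2 * m) + 1 := by omega
        have h2 : i + k + 1 = 2 * (2 * m + 1) := by omega
        have w := W k hk2p
        rw [h2, h1] at w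
        simp [tm_odd, tm_even] at w

/-- Ternary coding of first differences of Thue–Morse. -/
def tmf (n : ℕ) : Fin 3 :=
  if tm n = tm (n + 1) then 0 else if tm n then 2 else 1

lemma tmf_iff {x y : ℕ} (h : tmf x = tmf y) :
    (tm x = tm y) ↔ (tm (x + 1) = tm (y + 1)) := by
  unfold tmf at h
  cases hx : tm x <;> cases hx1 : tm (x+1) <;> cases hy : tm y <;> cases hy1 : tm (y+1) <;>
    simp_all

lemma tmf_ne {x y : ℕ} (h : tmf x = tmf y) (hne : tm x ≠ tm y) :
    tm x = tm (x + 1) := by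
  unfold tmf at h
  cases hx : tm x <;> cases hx1 : tm (x+1) <;> cases hy : tm y <;> cases hy1 : tm (y+1) <;>
    simp_all

/-- There exists an infinite square-free sequence over a three-letter alphabet. -/
theorem exists_squarefree_sequence_three_letters :
    ∃ f : ℕ → Fin 3, ∀ i : ℕ, ∀ n : ℕ, 1 ≤ n → ∃ k < n, f (i + k) ≠ f (i + n + k) := by
  refine ⟨tmf, fun i n hn => ?_⟩
  by_contra hcon
  push_neg at hcon
  -- hcon : ∀ k < n, tmf (i + k) = tmf (i + n + k)
  have chain : ∀ k < n, (tm (i + k) = tm (i + n + k)) ↔ (tm (i + (k+1)) = tm (i + n + (k+1))) := by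
    intro k hk
    have := tmf_iff (hcon k hk)
    have e1 : i + k + 1 = i + (k + 1) := by ring
    have e2 : i + n + k + 1 = i + n + (k + 1) := by ring
    rwa [e1, e2] at this
  by_cases hb : tm (i + 0) = tm (i + n + 0)
  · -- all b k true : overlap in tm
    have hall : ∀ k ≤ n, tm (i + k) = tm (i + n + k) := by
      intro k hk
      induction k with
      | zero => exact hb
      | succ j ihj =>
        exact (chain j (by omega)).mp (ihj (by omega))
    exact tm_no_overlap n hn i hall
  · -- all b k false : tm constant on the block, contradiction
    have hallne : ∀ k < n, tm (i + k) ≠ tm (i + n + k) := by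
      intro k hk
      induction k with
      | zero => exact hb
      | succ j ihj =>
        intro he
        exact ihj (by omega) ((chain j (by omega)).mpr (by
          have e1 : i + (j + 1) = i + j + 1 := by ring
          have e2 : i + n + (j + 1) = i + n + j + 1 := by ring
          rw [e1, e2] at he ⊢
          exact he))
    have hconst : ∀ k ≤ n, tm (i + k) = tm i := by
      intro k hk
      induction k with
      | zero => rfl
      | succ j ihj =>
        have hstep : tm (i + j) = tm (i + j + 1) :=
          tmf_ne (hcon j (by omega)) (hallne j (by omega))
        have e1 : i + (j + 1) = i + j + 1 := by ring
        rw [e1, ← hstep]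
        exact ihj (by omega)
    apply hb
    simp only [Nat.add_zero]
    exact (hconst n le_rfl).symm
end

section
/- (McKinsey; Huber-Dyson; Mostowski) Let n : ℕ and let R be a finite subset of FreeGroup (Fin n). If the presented group G = PresentedGroup R is residually finite, i.e., for every g ∈ G with g ≠ 1 there exists a finite group H and a group homomorphism φ : G →* H with φ g ≠ 1, then the word problem for the presentation is decidable: the predicate on List (Fin n × Bool) asserting that the image of a word w in PresentedGroup R equals 1 is a ComputablePred. -/
/-!
Trivial words are recursively enumerable for every finite presentation: `w` is trivial iff it
equals, in the free group, a product of conjugates of relators and their inverses, and equality in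
the free group is decided by free reduction. If the group is residually finite, nontrivial words
are recursively enumerable as well: `w` is nontrivial iff it survives in a finite quotient, hence
(Cayley) under a homomorphism to some `Equiv.Perm (Fin k)` killing the relators, and such a
homomorphism is a finite table of permutations that can be checked. A predicate that is r.e. with
r.e. complement is computable (Post).
-/

open Encodable in
theorem REPred.exists_of_primrecRel {α β : Type*} [Primcodable α] [Primcodable β]
    {q : α → β → Prop} (hq : PrimrecRel q) : REPred fun a => ∃ b, q a b := by
  classical
  have hcheck : Primrec₂ fun a b => Option.guard (fun b => decide (q a b)) b :=
    (Primrec.option_guard (p := fun (x : α × β) b => q x.1 b)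
      (hq.comp (Primrec.fst.comp Primrec.fst) Primrec.snd) Primrec.snd).to₂
  have hsearch : Partrec fun a =>
      Nat.rfindOpt fun m => (decode (α := β) m).bind (Option.guard fun b => decide (q a b)) :=
    Partrec.rfindOpt (Primrec.option_bind (Primrec.decode.comp Primrec.snd)
      (hcheck.comp (Primrec.fst.comp Primrec.fst) Primrec.snd).to₂).to_comp
  refine hsearch.dom_re.of_eq fun a => ?_
  simp only [Nat.rfindOpt_dom, Option.mem_def, Option.bind_eq_some_iff, Option.guard_eq_some_iff,
    decide_eq_true_eq]
  constructor
  · rintro ⟨_, _, b, -, rfl, hb⟩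
    exact ⟨_, hb⟩
  · rintro ⟨b, hb⟩
    exact ⟨encode b, b, b, encodek b, rfl, hb⟩

theorem PrimrecRel.forall_of_finite {α β : Type*} [Primcodable α] [Primcodable β] [Finite β]
    {R : α → β → Prop} (hR : PrimrecRel R) : PrimrecPred fun a => ∀ b, R a b := by
  obtain ⟨l, -, hl⟩ := Finite.exists_univ_list β
  exact (hR.swap.forall_mem_list.comp (.const l) .id).of_eq fun a => by simp [hl]

theorem PrimrecRel.forall_lt' {β : Type*} [Primcodable β] {R : ℕ → β → Prop}
    (hR : PrimrecRel R) : PrimrecRel fun k b => ∀ j < k, R j b :=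
  (hR.forall_mem_list.comp (Primrec.list_range.comp .fst) .snd).of_eq fun _ => by simp

theorem exists_perm_fin_apply_ne_one {G H : Type*} [Group G] [Group H] [Finite H] (φ : G →* H)
    {g : G} (hg : φ g ≠ 1) : ∃ (k : ℕ) (ψ : G →* Equiv.Perm (Fin k)), ψ g ≠ 1 := by
  let e := Finite.equivFin H
  refine ⟨_, (e.permCongrHom.toMonoidHom.comp (MulAction.toPermHom H H)).comp φ,
    fun h => hg ?_⟩
  have := congrArg (fun σ : Equiv.Perm (Fin _) => e.symm (σ (e 1))) h
  simpa using this

namespace Primrec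
open FreeGroup
variable {α : Type*} [Primcodable α]

theorem freeGroup_invRev : Primrec (@invRev α) :=
  list_reverse.comp (list_map .id ((fst.comp snd).pair (Primrec.not.comp (snd.comp snd))).to₂)

theorem freeGroup_reduce [DecidableEq α] : Primrec (@reduce α _) := by
  have hcancel : PrimrecRel fun (x hd : α × Bool) => x.1 = hd.1 ∧ x.2 = !hd.2 :=
    (Primrec.eq.comp (fst.comp fst) (fst.comp snd)).and
      (Primrec.eq.comp (snd.comp fst) (Primrec.not.comp (snd.comp snd)))
  have hstep : Primrec₂ fun (x : α × Bool) (l : List (α × Bool)) =>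
      (List.casesOn l [x] fun hd tl => if x.1 = hd.1 ∧ x.2 = !hd.2 then tl else x :: hd :: tl :
        List (α × Bool)) :=
    list_casesOn snd (list_cons.comp fst (const [])) (Primrec.ite
      (hcancel.comp (fst.comp fst) (fst.comp snd)) (snd.comp snd)
      (list_cons.comp (fst.comp fst) (list_cons.comp (fst.comp snd) (snd.comp snd)))).to₂
  exact (list_rec .id (const []) (hstep.comp (fst.comp snd) (snd.comp (snd.comp snd))).to₂).of_eq
    fun L => rfl

theorem freeGroup_mk_eq [DecidableEq α] :
    PrimrecRel fun u v : List (α × Bool) => FreeGroup.mk u = FreeGroup.mk v :=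
  (Primrec.eq.comp (freeGroup_reduce.comp fst) (freeGroup_reduce.comp snd)).of_eq
    fun _ => ⟨reduce.exact, reduce.sound⟩

end Primrec

namespace FreeGroup

section ConjProduct

variable {α : Type*}

def conjProduct (c : List (List (α × Bool) × List (α × Bool))) : List (α × Bool) :=
  c.flatMap fun p => p.1 ++ p.2 ++ invRev p.1

theorem mk_conjProduct (c : List (List (α × Bool) × List (α × Bool))) :
    mk (conjProduct c) = (c.map fun p => mk p.1 * mk p.2 * (mk p.1)⁻¹).prod := by
  induction c with
  | nil => rfl
  | cons p c ih =>
    rw [conjProduct, List.flatMap_cons, ← mul_mk, ← conjProduct, ih]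
    simp [← mul_mk, inv_mk, mul_assoc]

theorem mem_normalClosure_iff_exists_conjProduct {rels : List (List (α × Bool))}
    {w : List (α × Bool)} :
    mk w ∈ Subgroup.normalClosure {x | ∃ u ∈ rels, mk u = x} ↔
      ∃ c : List (List (α × Bool) × List (α × Bool)),
        (∀ p ∈ c, p.2 ∈ rels ∨ invRev p.2 ∈ rels) ∧ mk w = mk (conjProduct c) := by
  set N := Subgroup.normalClosure {x | ∃ u ∈ rels, mk u = x}
  constructor
  · intro hw
    generalize mk w = x at hw
    induction hw using Subgroup.closure_induction with
    | mem x hx =>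
      obtain ⟨_, ⟨u, hu, rfl⟩, hconj⟩ := Group.mem_conjugatesOfSet_iff.1 hx
      obtain ⟨g, rfl⟩ := isConj_iff.1 hconj
      obtain ⟨v, rfl⟩ := Quot.exists_rep g
      exact ⟨[(v, u)], by simp [hu], by simp [mk_conjProduct]⟩
    | one => exact ⟨[], by simp, rfl⟩
    | mul x y _ _ hx hy =>
      obtain ⟨c, hc, rfl⟩ := hx
      obtain ⟨d, hd, rfl⟩ := hy
      refine ⟨c ++ d, fun p hp => ?_, by simp [mk_conjProduct]⟩
      rcases List.mem_append.1 hp with hp | hp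
      exacts [hc p hp, hd p hp]
    | inv x _ hx =>
      obtain ⟨c, hc, rfl⟩ := hx
      refine ⟨(c.map fun p => (p.1, invRev p.2)).reverse, ?_, ?_⟩
      · simp only [List.mem_reverse, List.mem_map]
        rintro _ ⟨p, hp, rfl⟩
        simpa [or_comm] using hc p hp
      · simp [mk_conjProduct, List.prod_inv_reverse, Function.comp_def, inv_mk]
  · rintro ⟨c, hc, hw⟩
    rw [hw, mk_conjProduct]
    refine list_prod_mem fun x hx => ?_
    obtain ⟨p, hp, rfl⟩ := List.mem_map.1 hx
    have hr : mk p.2 ∈ N := by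
      rcases hc p hp with h | h
      · exact Subgroup.subset_normalClosure ⟨_, h, rfl⟩
      · simpa [inv_mk] using N.inv_mem (Subgroup.subset_normalClosure ⟨_, h, rfl⟩)
    exact Subgroup.normalClosure_normal.conj_mem _ hr _

theorem primrec_conjProduct [Primcodable α] : Primrec (@conjProduct α) :=
  Primrec.list_flatMap .id ((Primrec.list_append.comp
    (Primrec.list_append.comp (Primrec.fst.comp Primrec.snd) (Primrec.snd.comp Primrec.snd))
    (Primrec.freeGroup_invRev.comp (Primrec.fst.comp Primrec.snd))).to₂)

theorem primrecRel_mk_eq_conjProduct [Primcodable α] [DecidableEq α]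
    (rels : List (List (α × Bool))) :
    PrimrecRel fun (w : List (α × Bool)) (c : List (List (α × Bool) × List (α × Bool))) =>
      (∀ p ∈ c, p.2 ∈ rels ∨ invRev p.2 ∈ rels) ∧ mk w = mk (conjProduct c) := by
  have hmem : PrimrecPred fun v => v ∈ rels :=
    ((PrimrecRel.exists_mem_list Primrec.eq).comp (.const rels) .id).of_eq fun v => by simp
  have hrels : PrimrecPred fun p : List (α × Bool) × List (α × Bool) =>
      p.2 ∈ rels ∨ invRev p.2 ∈ rels :=
    (hmem.or (hmem.comp Primrec.freeGroup_invRev)).comp .snd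
  exact (hrels.forall_mem_list.comp .snd).and
    (Primrec.freeGroup_mk_eq.comp .fst (primrec_conjProduct.comp .snd))

end ConjProduct

section PermTable

variable {n k : ℕ}

/- A table `t` lists, for each generator `i`, the values on `0, …, k - 1` of a permutation
(`(t i).1`) and of its inverse (`(t i).2`); lookups out of range return `0`. -/
def letterAct (t : Fin n → List ℕ × List ℕ) (x : Fin n × Bool) (j : ℕ) : ℕ :=
  (cond x.2 (t x.1).1 (t x.1).2).getD j 0

def wordAct (t : Fin n → List ℕ × List ℕ) (w : List (Fin n × Bool)) (j : ℕ) : ℕ :=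
  w.foldr (letterAct t) j

def IsPermTable (k : ℕ) (t : Fin n → List ℕ × List ℕ) : Prop :=
  ∀ x : Fin n × Bool, ∀ j < k,
    letterAct t x j < k ∧ letterAct t (x.1, !x.2) (letterAct t x j) = j

theorem wordAct_eq_lift_apply {t : Fin n → List ℕ × List ℕ}
    {f : Fin n → Equiv.Perm (Fin k)}
    (h : ∀ x (j : Fin k), letterAct t x j = cond x.2 (f x.1) (f x.1)⁻¹ j)
    (w : List (Fin n × Bool)) (j : Fin k) : wordAct t w j = lift f (mk w) j := by
  induction w with
  | nil => simp [wordAct, ← one_eq_mk]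
  | cons x w ih =>
    rw [wordAct, List.foldr_cons, ← wordAct, ih, h]
    simp [lift_mk]

namespace IsPermTable
variable {t : Fin n → List ℕ × List ℕ}

def perm (ht : IsPermTable k t) (i : Fin n) : Equiv.Perm (Fin k) where
  toFun j := ⟨letterAct t (i, true) j, (ht (i, true) j j.isLt).1⟩
  invFun j := ⟨letterAct t (i, false) j, (ht (i, false) j j.isLt).1⟩
  left_inv j := Fin.ext (ht (i, true) j j.isLt).2
  right_inv j := Fin.ext (ht (i, false) j j.isLt).2

theorem letterAct_eq (ht : IsPermTable k t) (x : Fin n × Bool) (j : Fin k) :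
    letterAct t x j = cond x.2 (ht.perm x.1) (ht.perm x.1)⁻¹ j := by
  obtain ⟨i, _ | _⟩ := x <;> rfl

end IsPermTable

def permTable (f : Fin n → Equiv.Perm (Fin k)) : Fin n → List ℕ × List ℕ :=
  fun i => (List.ofFn fun j => (f i j : ℕ), List.ofFn fun j => ((f i)⁻¹ j : ℕ))

theorem letterAct_permTable (f : Fin n → Equiv.Perm (Fin k)) (x : Fin n × Bool) (j : Fin k) :
    letterAct (permTable f) x j = cond x.2 (f x.1) (f x.1)⁻¹ j := by
  obtain ⟨i, _ | _⟩ := x <;> simp [letterAct, permTable]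

theorem isPermTable_permTable (f : Fin n → Equiv.Perm (Fin k)) :
    IsPermTable k (permTable f) := by
  rintro ⟨i, b⟩ j hj
  rw [letterAct_permTable f _ ⟨j, hj⟩, letterAct_permTable]
  cases b <;> simp

theorem forall_wordAct_eq_self_iff {t : Fin n → List ℕ × List ℕ}
    {f : Fin n → Equiv.Perm (Fin k)}
    (h : ∀ x (j : Fin k), letterAct t x j = cond x.2 (f x.1) (f x.1)⁻¹ j)
    (w : List (Fin n × Bool)) : (∀ j < k, wordAct t w j = j) ↔ lift f (mk w) = 1 := by
  simp only [Equiv.Perm.ext_iff, Equiv.Perm.one_apply, Fin.ext_iff, ← wordAct_eq_lift_apply h,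
    Fin.forall_iff]

theorem exists_separating_permTable_iff {rels : List (List (Fin n × Bool))}
    {w : List (Fin n × Bool)} :
    (∃ kt : ℕ × (Fin n → List ℕ × List ℕ), IsPermTable kt.1 kt.2 ∧
        (∀ u ∈ rels, ∀ j < kt.1, wordAct kt.2 u j = j) ∧
        ¬ ∀ j < kt.1, wordAct kt.2 w j = j) ↔
      ∃ (k : ℕ) (f : Fin n → Equiv.Perm (Fin k)),
        (∀ u ∈ rels, lift f (mk u) = 1) ∧ lift f (mk w) ≠ 1 := by
  constructor
  · rintro ⟨⟨k, t⟩, ht, hrels, hw⟩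
    simp only [forall_wordAct_eq_self_iff ht.letterAct_eq] at hrels hw
    exact ⟨k, ht.perm, hrels, hw⟩
  · rintro ⟨k, f, hrels, hw⟩
    refine ⟨(k, permTable f), isPermTable_permTable f, ?_⟩
    simpa only [forall_wordAct_eq_self_iff (letterAct_permTable f)] using ⟨hrels, hw⟩

open Primrec in
theorem primrec_letterAct :
    Primrec fun p : (Fin n → List ℕ × List ℕ) × (Fin n × Bool) × ℕ =>
      letterAct p.1 p.2.1 p.2.2 :=
  have table : Primrec fun p : (Fin n → List ℕ × List ℕ) × (Fin n × Bool) × ℕ =>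
      p.1 p.2.1.1 :=
    fin_app.comp fst (fst.comp (fst.comp snd))
  (list_getD 0).comp (cond (snd.comp (fst.comp snd)) (fst.comp table) (snd.comp table))
    (snd.comp snd)

open Primrec in
theorem primrec_wordAct :
    Primrec fun p : (Fin n → List ℕ × List ℕ) × List (Fin n × Bool) × ℕ =>
      wordAct p.1 p.2.1 p.2.2 :=
  list_foldr (fst.comp snd) (snd.comp snd)
    (primrec_letterAct.comp (pair (fst.comp fst) snd)).to₂

open Primrec in
theorem primrecRel_isPermTable : PrimrecRel (@IsPermTable n) := by
  let Arg := (ℕ × (Fin n → List ℕ × List ℕ)) × (Fin n × Bool)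
  have hact : Primrec fun q : ℕ × Arg => letterAct q.2.1.2 q.2.2 q.1 :=
    primrec_letterAct.comp (pair (snd.comp (fst.comp snd)) (pair (snd.comp snd) fst))
  have hback : Primrec fun q : ℕ × Arg =>
      letterAct q.2.1.2 (q.2.2.1, !q.2.2.2) (letterAct q.2.1.2 q.2.2 q.1) :=
    primrec_letterAct.comp (pair (snd.comp (fst.comp snd))
      (pair (pair (fst.comp (snd.comp snd)) (Primrec.not.comp (snd.comp (snd.comp snd)))) hact))
  have hstep : PrimrecRel fun (j : ℕ) (p : Arg) =>
      letterAct p.1.2 p.2 j < p.1.1 ∧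
        letterAct p.1.2 (p.2.1, !p.2.2) (letterAct p.1.2 p.2 j) = j :=
    (nat_lt.comp hact (fst.comp (fst.comp snd))).and (Primrec.eq.comp hback fst)
  have hletter : PrimrecRel fun (kt : ℕ × (Fin n → List ℕ × List ℕ)) (x : Fin n × Bool) =>
      ∀ j < kt.1,
        letterAct kt.2 x j < kt.1 ∧ letterAct kt.2 (x.1, !x.2) (letterAct kt.2 x j) = j :=
    (PrimrecRel.forall_lt' hstep).comp (fst.comp fst) .id
  exact hletter.forall_of_finite

open Primrec in
theorem primrecRel_separating_permTable (rels : List (List (Fin n × Bool))) :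
    PrimrecRel fun (w : List (Fin n × Bool)) (kt : ℕ × (Fin n → List ℕ × List ℕ)) =>
      IsPermTable kt.1 kt.2 ∧ (∀ u ∈ rels, ∀ j < kt.1, wordAct kt.2 u j = j) ∧
        ¬ ∀ j < kt.1, wordAct kt.2 w j = j := by
  have hpoint : PrimrecRel fun (j : ℕ) (wt : List (Fin n × Bool) × (Fin n → List ℕ × List ℕ)) =>
      wordAct wt.2 wt.1 j = j :=
    Primrec.eq.comp (primrec_wordAct.comp (pair (snd.comp snd) (pair (fst.comp snd) fst))) fst
  have hfixed : PrimrecRel fun (w : List (Fin n × Bool)) (kt : ℕ × (Fin n → List ℕ × List ℕ)) =>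
      ∀ j < kt.1, wordAct kt.2 w j = j :=
    (PrimrecRel.forall_lt' hpoint).comp (fst.comp snd) (pair fst (snd.comp snd))
  have hrels : PrimrecPred fun kt : ℕ × (Fin n → List ℕ × List ℕ) =>
      ∀ u ∈ rels, ∀ j < kt.1, wordAct kt.2 u j = j :=
    (PrimrecRel.forall_mem_list hfixed).comp (const rels) .id
  exact (primrecRel_isPermTable.comp (fst.comp snd) (snd.comp snd)).and
    ((hrels.comp snd).and hfixed.not)

end PermTable

theorem notMem_normalClosure_iff_exists_lift {α : Type*} {R : Set (FreeGroup α)}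
    (hrf : ∀ g : PresentedGroup R, g ≠ 1 →
      ∃ (H : Type) (_ : Group H) (_ : Finite H) (φ : PresentedGroup R →* H), φ g ≠ 1)
    {x : FreeGroup α} :
    x ∉ Subgroup.normalClosure R ↔
      ∃ (k : ℕ) (f : α → Equiv.Perm (Fin k)), (∀ r ∈ R, lift f r = 1) ∧ lift f x ≠ 1 := by
  constructor
  · intro hx
    obtain ⟨H, _, _, φ, hφ⟩ :=
      hrf (PresentedGroup.mk R x) (mt PresentedGroup.mk_eq_one_iff.1 hx)
    obtain ⟨k, ψ, hψ⟩ := exists_perm_fin_apply_ne_one φ hφ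
    have hlift : ∀ y, lift (fun a => ψ (PresentedGroup.of a)) y = ψ (PresentedGroup.mk R y) :=
      fun y => (lift_unique (ψ.comp (PresentedGroup.mk R)) fun _ => rfl).symm
    refine ⟨k, fun a => ψ (PresentedGroup.of a), fun r hr => ?_, by rwa [hlift]⟩
    rw [hlift, PresentedGroup.one_of_mem hr, _root_.map_one]
  · rintro ⟨k, f, hR, hx⟩ hmem
    exact hx (PresentedGroup.to_group_eq_one_of_mem_closure hR x hmem)

end FreeGroup

/-- (McKinsey; Huber-Dyson; Mostowski) A finitely presented residually finite group has
decidable word problem. -/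
theorem residually_finite_word_problem_decidable (n : ℕ) (R : Set (FreeGroup (Fin n)))
    (hR : R.Finite)
    (hrf : ∀ g : PresentedGroup R, g ≠ 1 →
      ∃ (H : Type) (_ : Group H) (_ : Finite H) (φ : PresentedGroup R →* H), φ g ≠ 1) :
    ComputablePred fun w : List (Fin n × Bool) =>
      (QuotientGroup.mk (FreeGroup.mk w) : PresentedGroup R) = 1 := by
  classical
  obtain ⟨rels, rfl⟩ :
      ∃ rels : List (List (Fin n × Bool)), {x | ∃ u ∈ rels, FreeGroup.mk u = x} = R :=
    ⟨hR.toFinset.toList.map FreeGroup.toWord, by ext; simp [FreeGroup.mk_toWord]⟩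
  refine ComputablePred.computable_iff_re_compl_re.2 ⟨?_, ?_⟩
  · refine (REPred.exists_of_primrecRel (FreeGroup.primrecRel_mk_eq_conjProduct rels)).of_eq
      fun w => ?_
    rw [QuotientGroup.eq_one_iff, FreeGroup.mem_normalClosure_iff_exists_conjProduct]
  · refine (REPred.exists_of_primrecRel (FreeGroup.primrecRel_separating_permTable rels)).of_eq
      fun w => ?_
    rw [QuotientGroup.eq_one_iff, FreeGroup.notMem_normalClosure_iff_exists_lift hrf,
      FreeGroup.exists_separating_permTable_iff]
    simp
end

section
/- (Rabin; Mostowski — solvability of the word problem for linear groups) For every k, n : ℕ and every family of invertible matrices A : Fin k → GL (Fin n) ℚ, the predicate on List (Fin k × Bool) asserting that the image of a word w under the homomorphism FreeGroup.lift A : FreeGroup (Fin k) →* GL (Fin n) ℚ equals 1 is a ComputablePred; i.e., every finitely generated group of invertible rational matrices has decidable word problem. -/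
/-!
Let `d` be a common denominator of the entries of the matrices `A i` and `(A i)⁻¹`. Then the
matrices `d • (A i)^(±1)` are integral, and a word `w` is trivial in the group they generate iff
the product of the corresponding integral matrices is `d ^ |w| • 1`. Writing every integral matrix
as a difference `P - N` of matrices over `ℕ`, the product is computed from the pairs `(P, N)` by
additions and multiplications of natural numbers along the word, so this test is primitive
recursive in `w`.
-/

theorem Rat.exists_nat_sub_eq_nsmul_of_den_dvd {q : ℚ} {d : ℕ} (h : q.den ∣ d) :
    ∃ a b : ℕ, (a - b : ℚ) = d • q := by
  obtain ⟨c, rfl⟩ := h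
  refine ⟨(c * q.num).toNat, (-(c * q.num)).toNat, ?_⟩
  have := congrArg (Int.cast : ℤ → ℚ) (Int.toNat_sub_toNat_neg (c * q.num))
  push_cast at this
  rw [this, nsmul_eq_mul, ← Rat.mul_den_eq_num]
  push_cast
  ring

theorem Rat.exists_common_nat_sub_eq_nsmul {κ : Type*} [Fintype κ] (q : κ → ℚ) :
    ∃ d : ℕ, d ≠ 0 ∧ ∀ x, ∃ a b : ℕ, (a - b : ℚ) = d • q x :=
  ⟨∏ x, (q x).den, Finset.prod_ne_zero_iff.2 fun x _ => (q x).den_ne_zero, fun x =>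
    exists_nat_sub_eq_nsmul_of_den_dvd (Finset.dvd_prod_of_mem _ (Finset.mem_univ x))⟩

namespace Matrix

variable {ι m : Type*} [Fintype m] [DecidableEq m] {R : Type*} [Ring R]

/-- The pair `(P, N)` stands for `P - N`: primitive recursive arithmetic is available on `ℕ`
but not on `ℤ`. -/
def ofNatDiff (p : Matrix m m ℕ × Matrix m m ℕ) : Matrix m m R :=
  (Nat.castRingHom R).mapMatrix p.1 - (Nat.castRingHom R).mapMatrix p.2

def natDiffMul (p q : Matrix m m ℕ × Matrix m m ℕ) : Matrix m m ℕ × Matrix m m ℕ :=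
  (p.1 * q.1 + p.2 * q.2, p.1 * q.2 + p.2 * q.1)

theorem ofNatDiff_natDiffMul (p q : Matrix m m ℕ × Matrix m m ℕ) :
    (ofNatDiff (natDiffMul p q) : Matrix m m R) = ofNatDiff p * ofNatDiff q := by
  simp only [ofNatDiff, natDiffMul, map_add, map_mul]
  noncomm_ring

theorem ofNatDiff_one_zero : (ofNatDiff (1, 0) : Matrix m m R) = 1 := by
  simp [ofNatDiff]

theorem ofNatDiff_eq_nsmul_one_iff [CharZero R] (p : Matrix m m ℕ × Matrix m m ℕ) (s : ℕ) :
    (ofNatDiff p : Matrix m m R) = s • 1 ↔ p.1 = s • 1 + p.2 := by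
  have hinj : Function.Injective ((Nat.castRingHom R).mapMatrix : Matrix m m ℕ → Matrix m m R) :=
    Matrix.map_injective Nat.cast_injective
  rw [ofNatDiff, sub_eq_iff_eq_add, ← hinj.eq_iff, map_add, map_nsmul, map_one]

def natDiffProd (p : ι → Matrix m m ℕ × Matrix m m ℕ) (w : List ι) :
    Matrix m m ℕ × Matrix m m ℕ :=
  w.foldr (fun i q => natDiffMul (p i) q) (1, 0)

theorem ofNatDiff_natDiffProd (p : ι → Matrix m m ℕ × Matrix m m ℕ) (w : List ι) :
    (ofNatDiff (natDiffProd p w) : Matrix m m R) = (w.map fun i => ofNatDiff (p i)).prod := by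
  induction w with
  | nil => exact ofNatDiff_one_zero
  | cons i w ih => rw [List.map_cons, List.prod_cons, ← ih, ← ofNatDiff_natDiffMul]; rfl

theorem exists_ofNatDiff_eq_nsmul [Fintype ι] (M : ι → Matrix m m ℚ) :
    ∃ d : ℕ, d ≠ 0 ∧ ∃ p : ι → Matrix m m ℕ × Matrix m m ℕ, ∀ i, ofNatDiff (p i) = d • M i := by
  obtain ⟨d, hd, h⟩ := Rat.exists_common_nat_sub_eq_nsmul fun x : ι × m × m => M x.1 x.2.1 x.2.2
  choose a b hab using h
  refine ⟨d, hd, fun i => (of fun r c => a (i, r, c), of fun r c => b (i, r, c)), fun i => ?_⟩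
  ext r c
  simpa [ofNatDiff] using hab (i, r, c)

end Matrix

instance Matrix.primcodable {α : Type*} [Primcodable α] {m n : ℕ} :
    Primcodable (Matrix (Fin m) (Fin n) α) :=
  inferInstanceAs (Primcodable (Fin m → Fin n → α))

namespace Primrec

variable {α σ : Type*} [Primcodable α] [Primcodable σ] {l m n : ℕ}

theorem nat_pow : Primrec₂ ((· ^ ·) : ℕ → ℕ → ℕ) :=
  Primrec₂.unpaired'.1 Nat.Primrec.pow

theorem nat_fin_sum {f : Fin n → α → ℕ} (hf : ∀ i, Primrec (f i)) :
    Primrec fun a => ∑ i, f i a := by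
  induction n with
  | zero => simpa using const 0
  | succ n ih =>
    simpa only [Fin.sum_univ_succ] using nat_add.comp (hf 0) (ih fun i => hf i.succ)

theorem matrix_of {f : α → Matrix (Fin m) (Fin n) σ}
    (hf : Primrec fun x : (α × Fin m) × Fin n => f x.1.1 x.1.2 x.2) : Primrec f :=
  fin_curry.2 (fin_curry.2 hf)

theorem matrix_apply {f : α → Matrix (Fin m) (Fin n) σ} {i : α → Fin m} {j : α → Fin n}
    (hf : Primrec f) (hi : Primrec i) (hj : Primrec j) : Primrec fun a => f a (i a) (j a) :=
  fin_app.comp (fin_app.comp hf hi) hj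

theorem matrix_add : Primrec₂ ((· + ·) : Matrix (Fin m) (Fin n) ℕ → _ → _) :=
  matrix_of <| nat_add.comp (matrix_apply (fst.comp (fst.comp fst)) (snd.comp fst) snd)
    (matrix_apply (snd.comp (fst.comp fst)) (snd.comp fst) snd)

theorem matrix_mul :
    Primrec₂ ((· * ·) : Matrix (Fin l) (Fin m) ℕ → Matrix (Fin m) (Fin n) ℕ → _) :=
  matrix_of <| nat_fin_sum fun k => nat_mul.comp
    (matrix_apply (fst.comp (fst.comp fst)) (snd.comp fst) (const k))
    (matrix_apply (snd.comp (fst.comp fst)) (const k) snd)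

theorem matrix_nsmul_one : Primrec fun s : ℕ => s • (1 : Matrix (Fin n) (Fin n) ℕ) :=
  matrix_of <| (ite (Primrec.eq.comp (snd.comp fst) snd) (fst.comp fst) (const 0)).of_eq
    fun x => by simp [Matrix.one_apply]

end Primrec

namespace Matrix

variable {ι : Type*}

theorem primrec_natDiffMul {n : ℕ} :
    Primrec₂ (natDiffMul : _ → _ → Matrix (Fin n) (Fin n) ℕ × Matrix (Fin n) (Fin n) ℕ) :=
  open Primrec in
  (matrix_add.comp (matrix_mul.comp (fst.comp fst) (fst.comp snd))
      (matrix_mul.comp (snd.comp fst) (snd.comp snd))).pair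
    (matrix_add.comp (matrix_mul.comp (fst.comp fst) (snd.comp snd))
      (matrix_mul.comp (snd.comp fst) (fst.comp snd)))

theorem primrec_natDiffProd [Primcodable ι] [Finite ι] {n : ℕ}
    (p : ι → Matrix (Fin n) (Fin n) ℕ × Matrix (Fin n) (Fin n) ℕ) : Primrec (natDiffProd p) :=
  open Primrec in
  list_foldr .id (const _)
    (primrec_natDiffMul.comp ((dom_finite p).comp (fst.comp snd)) (snd.comp snd)).to₂

theorem primrecPred_list_prod_map_eq_one [Primcodable ι] [Fintype ι] {n : ℕ}
    (M : ι → Matrix (Fin n) (Fin n) ℚ) : PrimrecPred fun w : List ι => (w.map M).prod = 1 := by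
  obtain ⟨d, hd, p, hp⟩ := exists_ofNatDiff_eq_nsmul M
  have hscale (w : List ι) :
      (ofNatDiff (natDiffProd p w) : Matrix _ _ ℚ) = d ^ w.length • (w.map M).prod := by
    simp only [ofNatDiff_natDiffProd, hp]
    rw [← List.length_map (f := M), List.smul_prod, List.map_map]
    rfl
  have hdec : PrimrecPred fun w : List ι =>
      (natDiffProd p w).1 = d ^ w.length • 1 + (natDiffProd p w).2 :=
    open Primrec in
    Primrec.eq.comp (fst.comp (primrec_natDiffProd p))
      (matrix_add.comp (matrix_nsmul_one.comp (nat_pow.comp (const d) list_length))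
        (snd.comp (primrec_natDiffProd p)))
  refine hdec.of_eq fun w => ?_
  rw [← ofNatDiff_eq_nsmul_one_iff (R := ℚ), hscale]
  -- `Matrix` itself carries no torsion-freeness instance; its underlying function type does.
  exact (nsmul_right_injective (M := Fin n → Fin n → ℚ) (pow_ne_zero _ hd)).eq_iff

end Matrix

/-- (Rabin; Mostowski) Every finitely generated group of invertible rational matrices has
decidable word problem. -/
theorem linear_group_word_problem_decidable (k n : ℕ) (A : Fin k → GL (Fin n) ℚ) :
    ComputablePred fun w : List (Fin k × Bool) =>
      (FreeGroup.lift A) (FreeGroup.mk w) = 1 := by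
  refine (PrimrecPred.of_eq (Matrix.primrecPred_list_prod_map_eq_one
    fun x : Fin k × Bool => (cond x.2 (A x.1) (A x.1)⁻¹).val)
    fun w => ?_).computablePred
  rw [FreeGroup.lift_mk, Units.ext_iff, Units.val_one, ← Units.coeHom_apply, map_list_prod,
    List.map_map]
  rfl
end

section
/- (Higman-type encoding) Fix the four generators a, b, c, d of FreeGroup (Fin 4). For a subset E ⊆ ℕ, let R_E = { a^{-e} * b * a^{e} * (c^{-e} * d * c^{e})⁻¹ : e ∈ E } ⊆ FreeGroup (Fin 4), and let G_E = PresentedGroup R_E. Then for every m : ℕ, the image of a^{-m} * b * a^{m} * (c^{-m} * d * c^{m})⁻¹ in G_E equals 1 if and only if m ∈ E. -/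
namespace HigmanEncoding

/-- The first generator `a` of `FreeGroup (Fin 4)`. -/
def a : FreeGroup (Fin 4) := FreeGroup.of 0
/-- The second generator `b` of `FreeGroup (Fin 4)`. -/
def b : FreeGroup (Fin 4) := FreeGroup.of 1
/-- The third generator `c` of `FreeGroup (Fin 4)`. -/
def c : FreeGroup (Fin 4) := FreeGroup.of 2
/-- The fourth generator `d` of `FreeGroup (Fin 4)`. -/
def d : FreeGroup (Fin 4) := FreeGroup.of 3

/-- The relator `a^{-e} b a^{e} (c^{-e} d c^{e})⁻¹`. -/
def rel (e : ℕ) : FreeGroup (Fin 4) :=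
  a ^ (-(e : ℤ)) * b * a ^ (e : ℤ) * (c ^ (-(e : ℤ)) * d * c ^ (e : ℤ))⁻¹

/-- The relator set `R_E = { a^{-e} b a^{e} (c^{-e} d c^{e})⁻¹ : e ∈ E }`. -/
def RE (E : Set ℕ) : Set (FreeGroup (Fin 4)) := {x | ∃ e ∈ E, x = rel e}

end HigmanEncoding

/-!
For `m ∉ E` we build a permutation representation of `FreeGroup (Fin 4)` that kills every
relator `rel e` with `e ≠ m` but not `rel m`; it factors through `PresentedGroup (RE E)`, so the
image of `rel m` there is nontrivial.

It acts on `ℤ → ℤ`: `a` by the shift `f ↦ f (· + 1)`, `b` by adding the step function `[0 < x]`,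
and `c`, `d` by the conjugates of these under the transposition of `m` and `m + 1`. Then
`a^{-e} b a^{e}` adds the step `[e < x]`, and `rel e` acts trivially iff this step is invariant
under the transposition, i.e. iff it does not jump between `m` and `m + 1`, i.e. iff `e ≠ m`.
-/

open Equiv

namespace HigmanEncoding

theorem lift_rel_eq_one_iff {G : Type*} [Group G] (A B g : G) (e : ℕ) :
    FreeGroup.lift ![A, B, g * A * g⁻¹, g * B * g⁻¹] (rel e) = 1 ↔
      Commute g (A ^ (-(e : ℤ)) * B * A ^ (e : ℤ)) := by
  set X := A ^ (-(e : ℤ)) * B * A ^ (e : ℤ)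
  have hX : FreeGroup.lift ![A, B, g * A * g⁻¹, g * B * g⁻¹] (rel e) = X * (g * X * g⁻¹)⁻¹ := by
    simp only [rel, map_mul, map_inv, map_zpow, a, b, c, d, FreeGroup.lift_apply_of,
      Matrix.cons_val, conj_zpow]
    simp [X, mul_assoc]
  rw [hX, mul_inv_eq_one, commute_iff_eq, eq_mul_inv_iff_mul_eq, eq_comm]

section CompPerm

variable {α M : Type*}

def compPerm : Perm α →* Perm (α → M) where
  toFun π := π.arrowCongr (Equiv.refl M)
  map_one' := by ext; rfl
  map_mul' _ _ := by ext; rfl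

theorem compPerm_apply (π : Perm α) (f : α → M) : compPerm π f = f ∘ π.symm := rfl

theorem compPerm_inv_mul_addRight_mul [AddGroup M] (π : Perm α) (v : α → M) :
    (compPerm π)⁻¹ * Equiv.addRight v * compPerm π = Equiv.addRight (v ∘ π) := by
  ext f x
  simp [← map_inv, Perm.mul_apply, Perm.inv_def, compPerm_apply]

theorem commute_compPerm_addRight_iff [AddGroup M] (π : Perm α) (v : α → M) :
    Commute (compPerm π) (Equiv.addRight v) ↔ v ∘ π = v := by
  rw [commute_iff_eq, eq_comm, ← inv_mul_eq_iff_eq_mul, ← mul_assoc,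
    compPerm_inv_mul_addRight_mul]
  refine ⟨fun h => by simpa using congrArg (· 0) h, fun h => by rw [h]⟩

end CompPerm

theorem comp_swap_eq_self_iff {α β : Type*} [DecidableEq α] (f : α → β) (x y : α) :
    f ∘ swap x y = f ↔ f x = f y := by
  refine ⟨fun h => by simpa using congrFun h y, fun h => funext fun z => ?_⟩
  rcases eq_or_ne z x with rfl | hzx
  · simp [h]
  rcases eq_or_ne z y with rfl | hzy
  · simp [h]
  simp [swap_apply_of_ne_of_ne hzx hzy]

def step (e : ℤ) (x : ℤ) : ℤ := if e < x then 1 else 0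

theorem step_comp_addRight_neg (e : ℤ) : step 0 ∘ Equiv.addRight (-e) = step e := by
  ext x
  simp [step, ← sub_eq_add_neg]

theorem step_apply_eq_step_apply_add_one_iff (e n : ℤ) : step e n = step e (n + 1) ↔ e ≠ n := by
  unfold step
  split_ifs <;> simp <;> omega

def encoding (n : ℕ) : FreeGroup (Fin 4) →* Perm (ℤ → ℤ) :=
  let g := compPerm (swap (n : ℤ) (n + 1))
  FreeGroup.lift ![compPerm (Equiv.addRight (-1)), Equiv.addRight (step 0),
    g * compPerm (Equiv.addRight (-1)) * g⁻¹, g * Equiv.addRight (step 0) * g⁻¹]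

theorem encoding_rel_eq_one_iff (n e : ℕ) : encoding n (rel e) = 1 ↔ e ≠ n := by
  have hconj : compPerm (Equiv.addRight (-1)) ^ (-(e : ℤ)) * Equiv.addRight (step 0) *
      compPerm (Equiv.addRight (-1)) ^ (e : ℤ) = Equiv.addRight (step e) := by
    rw [zpow_neg, ← map_zpow, Equiv.zsmul_addRight, zsmul_neg, zsmul_one, Int.cast_id,
      compPerm_inv_mul_addRight_mul, step_comp_addRight_neg]
  rw [encoding, lift_rel_eq_one_iff, hconj, commute_compPerm_addRight_iff,
    comp_swap_eq_self_iff, step_apply_eq_step_apply_add_one_iff, Ne, Nat.cast_inj]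

end HigmanEncoding

open HigmanEncoding in
/-- (Higman-type encoding) In `G_E = PresentedGroup R_E`, the image of
`a^{-m} b a^{m} (c^{-m} d c^{m})⁻¹` is trivial iff `m ∈ E`. -/
theorem higman_encoding_mem_iff (E : Set ℕ) (m : ℕ) :
    (QuotientGroup.mk (rel m) : PresentedGroup (RE E)) = 1 ↔ m ∈ E := by
  rw [QuotientGroup.eq_one_iff]
  refine ⟨fun h => ?_, fun hm => Subgroup.subset_normalClosure ⟨m, hm, rfl⟩⟩
  by_contra hm
  have hker : Subgroup.normalClosure (RE E) ≤ (encoding m).ker := by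
    refine Subgroup.normalClosure_le_normal ?_
    rintro _ ⟨e, he, rfl⟩
    exact (encoding_rel_eq_one_iff m e).2 fun hem => hm (hem ▸ he)
  exact (encoding_rel_eq_one_iff m m).1 (hker h) rfl
end

section
/- Fix the four generators a, b, c, d of FreeGroup (Fin 4). Let g : ℕ → ℕ be a computable function and let E = Set.range g, and suppose the predicate (· ∈ E) on ℕ is not a ComputablePred. Let R_E = { a^{-e} * b * a^{e} * (c^{-e} * d * c^{e})⁻¹ : e ∈ E } ⊆ FreeGroup (Fin 4). Then the word problem for the finitely generated, recursively presented group G_E = PresentedGroup R_E is unsolvable: the predicate on List (Fin 4 × Bool) asserting that the image of a word w in PresentedGroup R_E equals 1 is not a ComputablePred. -/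
/-!
Send `a, b` and `c, d` to the two copies of the free group `F(x, y)` in its double
`F(x, y) *_K F(x, y)` along `K = ⟨x^{-e} y x^{e} : e ∈ E⟩`. Every relator of `R_E` dies there, and
`rel m` survives unless `x^{-m} y x^{m} ∈ K`. In the lamplighter group `ℤ ≀ ℤ` the element
`x^{-k} y x^{k}` becomes the lamp at `k`, and the lamps lit only at positions in `E` form a subgroup,
so `x^{-m} y x^{m} ∈ K` forces `m ∈ E`. Hence `rel m = 1` in `G_E` iff `m ∈ E`, and since a word for
`rel m` is computable from `m`, membership in `E` reduces to the word problem of `G_E`.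
-/

namespace RegularWreathProduct

variable {D Q : Type*} [Group D] [Group Q]

def baseSupported (S : Set Q) : Subgroup (D ≀ᵣ Q) where
  carrier := {w | w.right = 1 ∧ Function.mulSupport w.left ⊆ S}
  one_mem' := ⟨rfl, by simp⟩
  mul_mem' := by
    rintro v w ⟨hv, hvS⟩ ⟨hw, hwS⟩
    refine ⟨by simp [hv, hw], ?_⟩
    simp only [mul_left, hv, inv_one, one_mul]
    exact (Function.mulSupport_mul _ _).trans (Set.union_subset hvS hwS)
  inv_mem' := by
    rintro w ⟨hw, hwS⟩
    refine ⟨by simp [hw], ?_⟩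
    simpa only [inv_left, hw, one_mul, Function.mulSupport_inv] using hwS

variable [DecidableEq Q]

def lamp (q : Q) (d : D) : D ≀ᵣ Q := ⟨Pi.mulSingle q d, 1⟩

theorem lamp_mem_baseSupported_iff {S : Set Q} {q : Q} {d : D} (hd : d ≠ 1) :
    lamp q d ∈ baseSupported S ↔ q ∈ S := by
  change 1 = 1 ∧ Function.mulSupport (Pi.mulSingle q d) ⊆ S ↔ q ∈ S
  rw [Pi.mulSupport_mulSingle_of_ne hd]
  simp

theorem inl_mul_lamp_mul_inl_inv (p q : Q) (d : D) :
    inl p * lamp q d * (inl p)⁻¹ = lamp (p * q) d := by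
  ext x
  · simp [lamp, Pi.mulSingle_apply, inv_mul_eq_iff_eq_mul]
  · simp [lamp]

end RegularWreathProduct

theorem Monoid.PushoutI.of_true_eq_of_false_iff {H : Type*} [Group H] (K : Subgroup H) {h : H} :
    of (φ := fun _ : Bool => K.subtype) true h = of false h ↔ h ∈ K := by
  have hinj (_ : Bool) : Function.Injective K.subtype := K.subtype_injective
  refine ⟨fun heq => ?_, fun hh => ?_⟩
  · have hmem : of (φ := fun _ : Bool => K.subtype) true h ∈ (of true).range ⊓ (of false).range :=
      ⟨⟨h, rfl⟩, ⟨h, heq.symm⟩⟩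
    rw [inf_of_range_eq_base_range hinj (by decide)] at hmem
    obtain ⟨k, hk⟩ := hmem
    rw [← of_apply_eq_base _ true] at hk
    exact of_injective hinj true hk ▸ k.2
  · exact (of_apply_eq_base _ true (⟨h, hh⟩ : K)).trans (of_apply_eq_base _ false _).symm

theorem FreeGroup.mk_replicate {α : Type*} (x : α × Bool) (n : ℕ) :
    mk (List.replicate n x) = mk [x] ^ n := by
  induction n with
  | zero => rfl
  | succ n ih => rw [List.replicate_succ', ← mul_mk, ih, pow_succ]

def PresentedGroup.WordProblem {α : Type*} (rels : Set (FreeGroup α)) (w : List (α × Bool)) :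
    Prop :=
  mk rels (FreeGroup.mk w) = 1

namespace HigmanEncoding

def conjPow {G : Type*} [Group G] (x y : G) (k : ℤ) : G := x ^ (-k) * y * x ^ k

theorem map_conjPow {G H : Type*} [Group G] [Group H] (f : G →* H) (x y : G) (k : ℤ) :
    f (conjPow x y k) = conjPow (f x) (f y) k := by
  simp only [conjPow, map_mul, map_zpow]

open RegularWreathProduct in
theorem conjPow_inl_lamp {D Q : Type*} [Group D] [Group Q] [DecidableEq Q] (p q : Q) (d : D)
    (k : ℤ) : conjPow (inl p) (lamp q d) k = lamp (p ^ (-k) * q) d := by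
  rw [conjPow, ← map_zpow, ← map_zpow, show p ^ k = (p ^ (-k))⁻¹ by simp, map_inv,
    inl_mul_lamp_mul_inl_inv]

open FreeGroup Monoid

open RegularWreathProduct Multiplicative in
theorem conjPow_mem_closure_iff {α : Type*} [DecidableEq α] {i j : α} (hij : i ≠ j)
    {E : Set ℤ} {m : ℤ} :
    conjPow (of i) (of j) m ∈ Subgroup.closure (conjPow (of i) (of j) '' E) ↔ m ∈ E := by
  refine ⟨fun hm => ?_, fun hm => Subgroup.subset_closure (Set.mem_image_of_mem _ hm)⟩
  let φ : FreeGroup α →* Multiplicative ℤ ≀ᵣ Multiplicative ℤ :=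
    FreeGroup.lift fun k => if k = i then inl (ofAdd (-1)) else lamp 1 (ofAdd 1)
  have hφ (k : ℤ) : φ (conjPow (of i) (of j) k) = lamp (ofAdd k) (ofAdd 1) := by
    simp only [φ, map_conjPow, lift_apply_of, if_pos, if_neg hij.symm, conjPow_inl_lamp]
    congr 1
    simp [← ofAdd_zsmul]
  have hle : Subgroup.closure (conjPow (of i) (of j) '' E) ≤
      (baseSupported (toAdd ⁻¹' E)).comap φ := by
    rw [Subgroup.closure_le]
    rintro _ ⟨e, he, rfl⟩
    simpa [hφ, lamp_mem_baseSupported_iff] using he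
  simpa [hφ, lamp_mem_baseSupported_iff] using hle hm

theorem rel_eq_conjPow_mul_inv (e : ℕ) : rel e = conjPow a b e * (conjPow c d e)⁻¹ := rfl

theorem mk_rel_eq_one_iff {E : Set ℕ} {m : ℕ} :
    PresentedGroup.mk (RE E) (rel m) = 1 ↔ m ∈ E := by
  refine ⟨fun h => ?_, fun hm => PresentedGroup.one_of_mem ⟨m, hm, rfl⟩⟩
  let K : Subgroup (FreeGroup (Fin 2)) := Subgroup.closure (conjPow (of 0) (of 1) '' ((↑) '' E))
  let gens : Fin 4 → PushoutI fun _ : Bool => K.subtype :=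
    ![PushoutI.of true (of 0), PushoutI.of true (of 1), PushoutI.of false (of 0),
      PushoutI.of false (of 1)]
  have hlift (e : ℕ) : FreeGroup.lift gens (rel e) = PushoutI.of true (conjPow (of 0) (of 1) e) *
      (PushoutI.of false (conjPow (of 0) (of 1) e))⁻¹ := by
    simp [rel_eq_conjPow_mul_inv, map_conjPow, gens, a, b, c, d]
  have hrels : ∀ r ∈ RE E, FreeGroup.lift gens r = 1 := by
    rintro _ ⟨e, he, rfl⟩
    rw [hlift, mul_inv_eq_one, PushoutI.of_true_eq_of_false_iff]
    exact Subgroup.subset_closure ⟨e, ⟨e, he, rfl⟩, rfl⟩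
  have hm := PresentedGroup.to_group_eq_one_of_mem_closure hrels _
    (PresentedGroup.mk_eq_one_iff.mp h)
  rw [hlift, mul_inv_eq_one, PushoutI.of_true_eq_of_false_iff,
    conjPow_mem_closure_iff (by decide)] at hm
  exact Nat.cast_injective.mem_set_image.mp hm

def relWord (m : ℕ) : List (Fin 4 × Bool) :=
  List.replicate m (0, false) ++ [(1, true)] ++ List.replicate m (0, true) ++
    List.replicate m (2, false) ++ [(3, false)] ++ List.replicate m (2, true)

theorem mk_relWord (m : ℕ) : FreeGroup.mk (relWord m) = rel m := by
  have mk_true (i : Fin 4) : FreeGroup.mk [(i, true)] = of i := rfl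
  have mk_false (i : Fin 4) : FreeGroup.mk [(i, false)] = (of i)⁻¹ := rfl
  simp only [relWord, ← mul_mk, mk_replicate, mk_true, mk_false, rel, a, b, c, d, zpow_neg,
    zpow_natCast, inv_pow]
  group

theorem primrec_relWord : Primrec relWord := by
  have replicate (x : Fin 4 × Bool) : Primrec fun m : ℕ => List.replicate m x :=
    (Primrec.list_map Primrec.list_range (Primrec₂.const x)).of_eq fun m => by simp
  unfold relWord
  exact Primrec.list_append.comp (Primrec.list_append.comp (Primrec.list_append.comp
    (Primrec.list_append.comp (Primrec.list_append.comp (replicate _) (Primrec.const _))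
      (replicate _)) (replicate _)) (Primrec.const _)) (replicate _)

theorem mem_manyOneReducible_wordProblem (E : Set ℕ) :
    (· ∈ E) ≤₀ PresentedGroup.WordProblem (RE E) :=
  ⟨relWord, primrec_relWord.to_comp, fun m => by
    rw [PresentedGroup.WordProblem, mk_relWord, mk_rel_eq_one_iff]⟩

end HigmanEncoding

open HigmanEncoding in
theorem higman_encoding_word_problem_unsolvable_general (g : ℕ → ℕ)
    (hE : ¬ ComputablePred fun m : ℕ => m ∈ Set.range g) :
    ¬ ComputablePred fun w : List (Fin 4 × Bool) =>
      (QuotientGroup.mk (FreeGroup.mk w) : PresentedGroup (RE (Set.range g))) = 1 :=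
  fun hWordProblem => hE <|
    ComputablePred.computable_of_manyOneReducible (mem_manyOneReducible_wordProblem _) hWordProblem

open HigmanEncoding in
/-- If `E` is the range of a computable function but membership in `E` is undecidable, then
the recursively presented group `G_E = PresentedGroup (R_E)` has unsolvable word problem. -/
theorem higman_encoding_word_problem_unsolvable (g : ℕ → ℕ) (hg : Computable g)
    (hE : ¬ ComputablePred fun m : ℕ => m ∈ Set.range g) :
    ¬ ComputablePred fun w : List (Fin 4 × Bool) =>
      (QuotientGroup.mk (FreeGroup.mk w) : PresentedGroup (RE (Set.range g))) = 1 :=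
  higman_encoding_word_problem_unsolvable_general g hE
end
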